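/- Let ρ = Σ_i p_i |φ_i⟩⟨φ_i| be a full-rank density operator, H_S Hermitian, and set H_A = −H_S^T, the negative transpose of H_S in the eigenbasis {|φ_i⟩} of ρ. Then for the purification |Φ_ρ⟩ = Σ_i √p_i |φ_i⟩⊗|φ_i⟩ and H_tot = H_S ⊗ I + I ⊗ H_A, the energy variance equals twice the Wigner–Yanase skew information: ⟨Φ_ρ|H_tot²|Φ_ρ⟩ − ⟨Φ_ρ|H_tot|Φ_ρ⟩² = 2 W_{H_S}(ρ), where W_H(ρ) = −(1/2) Tr([H, √ρ]²) = Tr(ρ H²) − Tr(√ρ H √ρ H). -/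
import Mathlib


open Matrix BigOperators

/-- Matrix element ⟨v|A|w⟩. -/
noncomputable def matElem {n : Type*} [Fintype n] (v : n → ℂ)
    (A : Matrix n n ℂ) (w : n → ℂ) : ℂ :=
  star v ⬝ᵥ A.mulVec w

/-- Energy variance ⟨ψ|H²|ψ⟩ − ⟨ψ|H|ψ⟩² of a (unit) vector ψ. -/
noncomputable def variance {n : Type*} [Fintype n] (H : Matrix n n ℂ) (v : n → ℂ) : ℝ :=
  (matElem v (H * H) v).re - ((matElem v H v).re) ^ 2

/-- Quantum Fisher information computed from a spectral decomposition
`ρ = ∑ j, p j • |ψ j⟩⟨ψ j|`; terms with `p j + p k = 0` are omitted. -/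
noncomputable def QFI {ι : Type*} [Fintype ι] {n : Type*} [Fintype n]
    (p : ι → ℝ) (ψ : ι → n → ℂ) (H : Matrix n n ℂ) : ℝ :=
  2 * ∑ j, ∑ k, if p j + p k = 0 then 0 else
    (p j - p k) ^ 2 / (p j + p k) * Complex.normSq (matElem (ψ j) H (ψ k))

/-- Rank-one operator |v⟩⟨w| as a matrix. -/
noncomputable def ketbra {n : Type*} (v w : n → ℂ) : Matrix n n ℂ :=
  fun i j => v i * star (w j)

/-- Outer product |v⟩⟨v| as a matrix. -/
noncomputable def outer {n : Type*} (v : n → ℂ) : Matrix n n ℂ :=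
  fun i j => v i * star (v j)

section aux

variable {n : Type*} [Fintype n]

lemma matElem_one [DecidableEq n] (v w : n → ℂ) :
    matElem v (1 : Matrix n n ℂ) w = star v ⬝ᵥ w := by
  simp [matElem]

lemma matElem_sum {ι : Type*} (s : Finset ι) (v w : n → ℂ) (A : ι → Matrix n n ℂ) :
    matElem v (∑ k ∈ s, A k) w = ∑ k ∈ s, matElem v (A k) w := by
  simp only [matElem, Matrix.mulVec, dotProduct, Matrix.sum_apply, Finset.sum_mul,
    Finset.mul_sum]
  trans ∑ x : n, ∑ k ∈ s, ∑ i : n, star v x * (A k x i * w i)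
  · exact Finset.sum_congr rfl fun x _ => Finset.sum_comm
  · exact Finset.sum_comm

lemma matElem_add (v w : n → ℂ) (A B : Matrix n n ℂ) :
    matElem v (A + B) w = matElem v A w + matElem v B w := by
  simp [matElem, Matrix.add_mulVec, dotProduct_add]

lemma matElem_smul (c : ℂ) (v w : n → ℂ) (A : Matrix n n ℂ) :
    matElem v (c • A) w = c * matElem v A w := by
  simp [matElem, Matrix.smul_mulVec, dotProduct_smul, smul_eq_mul]

lemma matElem_neg (v w : n → ℂ) (A : Matrix n n ℂ) :
    matElem v (-A) w = -matElem v A w := by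
  simp [matElem, Matrix.neg_mulVec]

lemma outer_mulVec (u x : n → ℂ) :
    (outer u).mulVec x = (star u ⬝ᵥ x) • u := by
  funext j
  simp [outer, Matrix.mulVec, dotProduct, Finset.sum_mul, Finset.mul_sum]
  exact Finset.sum_congr rfl fun m _ => by ring

lemma ketbra_mulVec (u v x : n → ℂ) :
    (ketbra u v).mulVec x = (star v ⬝ᵥ x) • u := by
  funext j
  simp [ketbra, Matrix.mulVec, dotProduct, Finset.sum_mul, Finset.mul_sum]
  exact Finset.sum_congr rfl fun m _ => by ring

lemma matElem_ketbra (v a b w : n → ℂ) :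
    matElem v (ketbra a b) w = (star v ⬝ᵥ a) * (star b ⬝ᵥ w) := by
  simp only [matElem, ketbra_mulVec, dotProduct_smul, smul_eq_mul]
  ring

lemma matElem_mid (v u w : n → ℂ) (M N : Matrix n n ℂ) :
    matElem v (M * outer u * N) w = matElem v M u * matElem u N w := by
  simp only [matElem, ← Matrix.mulVec_mulVec, outer_mulVec, Matrix.mulVec_smul,
    dotProduct_smul, smul_eq_mul]
  ring

lemma trace_outer_mul (v : n → ℂ) (X : Matrix n n ℂ) :
    (outer v * X).trace = matElem v X v := by
  simp [Matrix.trace, Matrix.diag, Matrix.mul_apply, matElem, dotProduct,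
    Matrix.mulVec, outer, Finset.mul_sum]
  rw [Finset.sum_comm]
  exact Finset.sum_congr rfl fun m _ => Finset.sum_congr rfl fun i _ => by ring

lemma outer_mul_outer (u v : n → ℂ) :
    outer u * outer v = (star u ⬝ᵥ v) • ketbra u v := by
  ext i j
  simp [outer, ketbra, Matrix.mul_apply, dotProduct, Finset.sum_mul]
  exact Finset.sum_congr rfl fun m _ => by ring

end aux

section swaps

variable {α β γ δ M : Type*} [Fintype α] [Fintype β] [Fintype γ] [Fintype δ]
  [AddCommMonoid M]

lemma sum3_swap (f : α → β → γ → M) :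
    ∑ a, ∑ b, ∑ j, f a b j = ∑ j, ∑ a, ∑ b, f a b j := by
  trans ∑ a, ∑ j, ∑ b, f a b j
  · exact Finset.sum_congr rfl fun a _ => Finset.sum_comm
  · exact Finset.sum_comm

lemma sum4_swap (f : α → β → γ → δ → M) :
    ∑ a, ∑ b, ∑ i, ∑ j, f a b i j = ∑ i, ∑ j, ∑ a, ∑ b, f a b i j := by
  rw [sum3_swap (f := fun a b i => ∑ j, f a b i j)]
  exact Finset.sum_congr rfl fun i _ => sum3_swap _

end swaps

lemma sum_factor {d : ℕ} (F G X Y : Fin d → Fin d → ℂ) :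
    ∑ a, ∑ b, (∑ i, F i a * G i b) * (∑ j, X j a * Y j b)
      = ∑ i, ∑ j, (∑ a, F i a * X j a) * (∑ b, G i b * Y j b) := by
  calc ∑ a, ∑ b, (∑ i, F i a * G i b) * (∑ j, X j a * Y j b)
      = ∑ a, ∑ b, ∑ i, ∑ j, (F i a * G i b) * (X j a * Y j b) := by
        refine Finset.sum_congr rfl fun a _ => Finset.sum_congr rfl fun b _ => ?_
        rw [Finset.sum_mul_sum]
    _ = ∑ i, ∑ j, ∑ a, ∑ b, (F i a * G i b) * (X j a * Y j b) := sum4_swap _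
    _ = ∑ i, ∑ j, (∑ a, F i a * X j a) * (∑ b, G i b * Y j b) := by
        refine Finset.sum_congr rfl fun i _ => Finset.sum_congr rfl fun j _ => ?_
        rw [Finset.sum_mul_sum]
        exact Finset.sum_congr rfl fun a _ => Finset.sum_congr rfl fun b _ => by ring

lemma complete {d : ℕ} (φ : Fin d → Fin d → ℂ)
    (horth : ∀ i j, star (φ i) ⬝ᵥ φ j = if i = j then (1 : ℂ) else 0) :
    ∑ k, outer (φ k) = (1 : Matrix (Fin d) (Fin d) ℂ) := by
  set V : Matrix (Fin d) (Fin d) ℂ := Matrix.of fun a j => φ j a with hV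
  have h1 : Vᴴ * V = 1 := by
    ext i j
    have := horth i j
    simpa [hV, Matrix.mul_apply, Matrix.conjTranspose_apply, dotProduct,
      Matrix.one_apply] using this
  have h2 : V * Vᴴ = 1 := mul_eq_one_comm.mp h1
  ext a b
  have := congrFun (congrFun (congrArg (fun M : Matrix (Fin d) (Fin d) ℂ => (M : Matrix (Fin d) (Fin d) ℂ)) h2) a) b
  simpa [hV, Matrix.mul_apply, Matrix.conjTranspose_apply, Matrix.sum_apply,
    outer] using h2 ▸ rfl

lemma matElem_split {d : ℕ} (φ : Fin d → Fin d → ℂ)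
    (hcomp : ∑ k, outer (φ k) = (1 : Matrix (Fin d) (Fin d) ℂ))
    (v w : Fin d → ℂ) (M N : Matrix (Fin d) (Fin d) ℂ) :
    matElem v (M * N) w = ∑ k, matElem v M (φ k) * matElem (φ k) N w := by
  have h : M * N = ∑ k, M * outer (φ k) * N := by
    rw [← Finset.sum_mul, ← Finset.mul_sum, hcomp, mul_one]
  rw [h, matElem_sum]
  exact Finset.sum_congr rfl fun k _ => matElem_mid _ _ _ _ _

open Kronecker in
lemma matElem_kron {d : ℕ} (c : Fin d → ℂ) (hc : ∀ i, star (c i) = c i)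
    (φ : Fin d → Fin d → ℂ) (A B : Matrix (Fin d) (Fin d) ℂ) :
    matElem (fun q : Fin d × Fin d => ∑ i, c i * φ i q.1 * φ i q.2) (A ⊗ₖ B)
      (fun q : Fin d × Fin d => ∑ i, c i * φ i q.1 * φ i q.2)
    = ∑ i, ∑ j, c i * c j * (matElem (φ i) A (φ j) * matElem (φ i) B (φ j)) := by
  have hmv : (A ⊗ₖ B).mulVec (fun q : Fin d × Fin d => ∑ i, c i * φ i q.1 * φ i q.2)
      = fun q : Fin d × Fin d =>
        ∑ j, (c j * (A.mulVec (φ j)) q.1) * (B.mulVec (φ j)) q.2 := by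
    funext q
    obtain ⟨a, b⟩ := q
    simp only [Matrix.mulVec, dotProduct, Fintype.sum_prod_type,
      Matrix.kroneckerMap_apply, Finset.mul_sum, Finset.sum_mul]
    rw [sum3_swap]
    refine Finset.sum_congr rfl fun j _ => ?_
    rw [Finset.sum_comm]
    refine Finset.sum_congr rfl fun a' _ => Finset.sum_congr rfl fun b' _ => ?_
    ring
  rw [matElem, hmv]
  simp only [dotProduct, Fintype.sum_prod_type, Pi.star_apply, star_sum, star_mul', hc]
  calc ∑ a, ∑ b, (∑ i, c i * star (φ i a) * star (φ i b)) *
          (∑ j, c j * (A.mulVec (φ j)) a * (B.mulVec (φ j)) b)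
      = ∑ i, ∑ j, (∑ a, (c i * star (φ i a)) * (c j * (A.mulVec (φ j)) a)) *
          (∑ b, star (φ i b) * (B.mulVec (φ j)) b) :=
        sum_factor (fun i a => c i * star (φ i a)) (fun i b => star (φ i b))
          (fun j a => c j * (A.mulVec (φ j)) a) (fun j b => (B.mulVec (φ j)) b)
    _ = ∑ i, ∑ j, c i * c j * (matElem (φ i) A (φ j) * matElem (φ i) B (φ j)) := by
        refine Finset.sum_congr rfl fun i _ => Finset.sum_congr rfl fun j _ => ?_
        have h1 : ∑ a, (c i * star (φ i a)) * (c j * (A.mulVec (φ j)) a)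
            = c i * c j * ∑ a, star (φ i a) * (A.mulVec (φ j)) a := by
          rw [Finset.mul_sum]
          exact Finset.sum_congr rfl fun a _ => by ring
        rw [h1, matElem, matElem, dotProduct, dotProduct]
        simp only [Pi.star_apply]
        ring

open Kronecker in
lemma matElem_kron' {d : ℕ} (c : Fin d → ℂ) (hc : ∀ i, star (c i) = c i)
    (φ : Fin d → Fin d → ℂ) (Φ : Fin d × Fin d → ℂ)
    (hΦ : Φ = fun q => ∑ i, c i * φ i q.1 * φ i q.2)
    (A B : Matrix (Fin d) (Fin d) ℂ) :
    matElem Φ (A ⊗ₖ B) Φ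
      = ∑ i, ∑ j, c i * c j * (matElem (φ i) A (φ j) * matElem (φ i) B (φ j)) := by
  subst hΦ; exact matElem_kron c hc φ A B

open Kronecker in
/-- With auxiliary Hamiltonian H_A = −H_Sᵀ (transpose in the eigenbasis of ρ),
the purification's energy variance equals twice the Wigner–Yanase skew
information W_H(ρ) = −(1/2)Tr([H,√ρ]²) = Tr(ρH²) − Tr(√ρ H √ρ H). -/
theorem purification_variance_eq_twice_skew {d : ℕ}
    (HS : Matrix (Fin d) (Fin d) ℂ) (hH : HS.IsHermitian)
    (p : Fin d → ℝ) (φ : Fin d → Fin d → ℂ)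
    (horth : ∀ i j, star (φ i) ⬝ᵥ φ j = if i = j then (1 : ℂ) else 0)
    (hp : ∀ j, 0 < p j) (hsum : ∑ j, p j = 1)
    (ρ S : Matrix (Fin d) (Fin d) ℂ)
    (hρ : ρ = ∑ j, (p j : ℂ) • outer (φ j))
    (hS : S = ∑ j, ((Real.sqrt (p j) : ℝ) : ℂ) • outer (φ j))
    (HA : Matrix (Fin d) (Fin d) ℂ)
    (hHA : HA = -∑ a, ∑ b, matElem (φ b) HS (φ a) • ketbra (φ a) (φ b))
    (Φ : Fin d × Fin d → ℂ)
    (hΦ : Φ = fun q => ∑ i, ((Real.sqrt (p i) : ℝ) : ℂ) * φ i q.1 * φ i q.2)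
    (Htot : Matrix (Fin d × Fin d) (Fin d × Fin d) ℂ)
    (hHtot : Htot = HS ⊗ₖ (1 : Matrix (Fin d) (Fin d) ℂ) +
      (1 : Matrix (Fin d) (Fin d) ℂ) ⊗ₖ HA) :
    variance Htot Φ
        = 2 * ((ρ * (HS * HS)).trace - (S * HS * S * HS).trace).re ∧
      -(1 / 2 : ℂ) * ((HS * S - S * HS) * (HS * S - S * HS)).trace
        = (ρ * (HS * HS)).trace - (S * HS * S * HS).trace := by
  have hc : ∀ i, star (((Real.sqrt (p i) : ℝ) : ℂ)) = ((Real.sqrt (p i) : ℝ) : ℂ) := by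
    intro i; exact Complex.conj_ofReal _
  have hcc : ∀ i, ((Real.sqrt (p i) : ℝ) : ℂ) * ((Real.sqrt (p i) : ℝ) : ℂ) = ((p i : ℝ) : ℂ) := by
    intro i
    rw [← Complex.ofReal_mul, Real.mul_self_sqrt (hp i).le]
  have hcomp := complete φ horth
  have hone : ∀ i j, matElem (φ i) (1 : Matrix (Fin d) (Fin d) ℂ) (φ j)
      = if i = j then 1 else 0 := by
    intro i j; rw [matElem_one, horth]
  have hAel : ∀ i j, matElem (φ i) HA (φ j) = -(matElem (φ j) HS (φ i)) := by
    intro i j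
    rw [hHA, matElem_neg, matElem_sum]
    simp only [matElem_sum, matElem_smul, matElem_ketbra, horth]
    simp [Finset.sum_ite_eq, Finset.sum_ite_eq']
  have hAA : ∀ i, matElem (φ i) (HA * HA) (φ i) = matElem (φ i) (HS * HS) (φ i) := by
    intro i
    rw [matElem_split φ hcomp, matElem_split φ hcomp]
    simp only [hAel]
    exact Finset.sum_congr rfl fun k _ => by ring
  -- traces
  have htrρ : (ρ * (HS * HS)).trace
      = ∑ i, ((p i : ℝ) : ℂ) * matElem (φ i) (HS * HS) (φ i) := by
    rw [hρ, Finset.sum_mul]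
    simp only [smul_mul_assoc, Matrix.trace_sum, Matrix.trace_smul, smul_eq_mul,
      trace_outer_mul]
  have htrS : (S * HS * S * HS).trace
      = ∑ i, ∑ j, ((Real.sqrt (p i) : ℝ) : ℂ) * ((Real.sqrt (p j) : ℝ) : ℂ) *
          (matElem (φ i) HS (φ j) * matElem (φ j) HS (φ i)) := by
    rw [hS]
    simp only [Finset.sum_mul, Finset.mul_sum, smul_mul_assoc, mul_smul_comm,
      Matrix.trace_sum, Matrix.trace_smul, smul_eq_mul]
    refine Finset.sum_congr rfl fun i _ => Finset.sum_congr rfl fun j _ => ?_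
    rw [show outer (φ j) * HS * outer (φ i) * HS
        = outer (φ j) * (HS * outer (φ i) * HS) by noncomm_ring]
    rw [trace_outer_mul, matElem_mid]
    ring
  -- matrix elements of Htot
  have hE1 : matElem Φ Htot Φ = 0 := by
    rw [hHtot, matElem_add,
      matElem_kron' _ hc φ Φ hΦ, matElem_kron' _ hc φ Φ hΦ]
    simp only [hone, hAel, mul_ite, ite_mul, mul_one, one_mul, mul_zero, zero_mul,
      Finset.sum_ite_eq, Finset.sum_ite_eq', Finset.mem_univ, if_true]
    rw [← Finset.sum_add_distrib]
    exact Finset.sum_eq_zero fun i _ => by ring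
  have hsq : Htot * Htot = (HS * HS) ⊗ₖ (1 : Matrix (Fin d) (Fin d) ℂ)
      + HS ⊗ₖ HA + (HS ⊗ₖ HA + (1 : Matrix (Fin d) (Fin d) ℂ) ⊗ₖ (HA * HA)) := by
    rw [hHtot, add_mul, mul_add, mul_add]
    simp only [← Matrix.mul_kronecker_mul, one_mul, mul_one]
  have hE2 : matElem Φ (Htot * Htot) Φ
      = 2 * ((ρ * (HS * HS)).trace - (S * HS * S * HS).trace) := by
    rw [hsq, matElem_add, matElem_add, matElem_add,
      matElem_kron' _ hc φ Φ hΦ, matElem_kron' _ hc φ Φ hΦ,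
      matElem_kron' _ hc φ Φ hΦ]
    simp only [hone, hAel, mul_ite, ite_mul, mul_one, one_mul, mul_zero, zero_mul,
      Finset.sum_ite_eq, Finset.sum_ite_eq', Finset.mem_univ, if_true]
    simp only [hAA]
    rw [htrρ, htrS]
    simp only [← hcc, mul_neg, Finset.sum_neg_distrib]
    ring
  constructor
  · show (matElem Φ (Htot * Htot) Φ).re - ((matElem Φ Htot Φ).re) ^ 2 = _
    rw [hE1, hE2]
    simp [Complex.mul_re]
  · -- second part
    have hSS : S * S = ρ := by
      rw [hS, hρ, Finset.sum_mul]
      simp only [Finset.mul_sum, smul_mul_assoc, mul_smul_comm, smul_smul,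
        outer_mul_outer, horth]
      refine Finset.sum_congr rfl fun i _ => ?_
      rw [Finset.sum_eq_single i]
      · have hkb : ketbra (φ i) (φ i) = outer (φ i) := rfl
        simp [hcc i, hkb]
      · intro b _ hb
        simp [if_neg (Ne.symm hb), hb]
      · simp
    have e1 : (HS * S * (HS * S)).trace = (S * HS * S * HS).trace := by
      rw [show HS * S * (HS * S) = HS * (S * HS * S) by noncomm_ring,
        Matrix.trace_mul_comm]
    have e2 : (HS * S * (S * HS)).trace = (ρ * (HS * HS)).trace := by
      rw [show HS * S * (S * HS) = HS * ((S * S) * HS) by noncomm_ring, hSS,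
        Matrix.trace_mul_comm]
      congr 1
      noncomm_ring
    have e3 : (S * HS * (HS * S)).trace = (ρ * (HS * HS)).trace := by
      rw [show S * HS * (HS * S) = S * (HS * HS * S) by noncomm_ring,
        Matrix.trace_mul_comm,
        show HS * HS * S * S = (HS * HS) * (S * S) by noncomm_ring, hSS,
        Matrix.trace_mul_comm]
    have e4 : (S * HS * (S * HS)).trace = (S * HS * S * HS).trace := by
      congr 1; noncomm_ring
    rw [sub_mul, mul_sub, mul_sub, Matrix.trace_sub, Matrix.trace_sub, Matrix.trace_sub,
      e1, e2, e3, e4]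
    ring
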